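/- Let F = (ℝ^m; f_1, …, f_N) be an affine IFS with a coding map π : {1,…,N}^∞ → ℝ^m, and let V = aff(π(Ω)) be the affine hull of the image of π. Then each f_n maps V into V, and for every σ ∈ {1,…,N}^∞ and every x ∈ V, lim_{k→∞} f_{σ_1}∘⋯∘f_{σ_k}(x) = π(σ); i.e., F restricted to V is point-fibred. -/

import Mathlib

/-- `ifsComp f σ k x = f_{σ 0} ∘ f_{σ 1} ∘ ⋯ ∘ f_{σ (k-1)} (x)`. -/
def ifsComp {E : Type*} {N : ℕ} (f : Fin N → E → E) (σ : ℕ → Fin N) : ℕ → E → E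
  | 0, x => x
  | k + 1, x => ifsComp f σ k (f (σ k) x)

/-- The inverse shift `s_n`, prepending the symbol `n` to a sequence. -/
def prependSymbol {N : ℕ} (n : Fin N) (σ : ℕ → Fin N) : ℕ → Fin N
  | 0 => n
  | k + 1 => σ k

/-!
The set of points at which a sequence of affine maps converges to a fixed point `c` is an affine
subspace, since affine maps commute with the operation `(u, v, w) ↦ t • (u -ᵥ v) +ᵥ w`. On the image
of the coding map, `f_{σ 0} ∘ ⋯ ∘ f_{σ (k-1)} (π τ) = π (σ₀ ⋯ σ_{k-1} τ)`, and these sequences converge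
to `σ` in the product topology, so continuity of `π` gives convergence to `π σ` on `range π`, hence on
its affine hull. Invariance of the hull holds because `f_n` maps `range π` into itself.
-/

open Filter Topology

section AffineSpan

variable {k V₁ P₁ V₂ P₂ : Type*} [Ring k] [AddCommGroup V₁] [Module k V₁] [AddTorsor V₁ P₁]
  [AddCommGroup V₂] [Module k V₂] [AddTorsor V₂ P₂]

theorem AffineMap.mapsTo_affineSpan (g : P₁ →ᵃ[k] P₂) {s : Set P₁} {t : Set P₂}
    (h : Set.MapsTo g s (affineSpan k t)) : Set.MapsTo g (affineSpan k s) (affineSpan k t) := by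
  intro x hx
  have hgx : g x ∈ (affineSpan k s).map g := AffineSubspace.mem_map.2 ⟨x, hx, rfl⟩
  rw [AffineSubspace.map_span] at hgx
  exact affineSpan_le.2 h.image_subset hgx

theorem AffineMap.tendsto_of_mem_affineSpan [TopologicalSpace V₂] [IsTopologicalAddGroup V₂]
    [ContinuousConstSMul k V₂] {ι : Type*} {l : Filter ι} (g : ι → P₁ →ᵃ[k] V₂) {s : Set P₁}
    {c : V₂} (h : ∀ x ∈ s, Tendsto (fun i => g i x) l (𝓝 c)) {x : P₁}
    (hx : x ∈ affineSpan k s) : Tendsto (fun i => g i x) l (𝓝 c) := by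
  refine affineSpan_induction hx h fun t u v w hu hv hw => ?_
  have hlim := ((hu.sub hv).const_smul t).add hw
  simpa only [AffineMap.map_vadd, AffineMap.linearMap_vsub, map_smul, vsub_eq_sub, vadd_eq_add,
    sub_self, smul_zero, zero_add] using hlim

end AffineSpan

def ifsCompAffine {k V P : Type*} [Ring k] [AddCommGroup V] [Module k V] [AddTorsor V P] {N : ℕ}
    (g : Fin N → P →ᵃ[k] P) (σ : ℕ → Fin N) : ℕ → P →ᵃ[k] P
  | 0 => AffineMap.id k P
  | n + 1 => (ifsCompAffine g σ n).comp (g (σ n))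

theorem coe_ifsCompAffine {k V P : Type*} [Ring k] [AddCommGroup V] [Module k V] [AddTorsor V P]
    {N : ℕ} (g : Fin N → P →ᵃ[k] P) (σ : ℕ → Fin N) (n : ℕ) :
    ⇑(ifsCompAffine g σ n) = ifsComp (fun i => g i) σ n := by
  induction n with
  | zero => rfl
  | succ n ih =>
    funext x
    simp only [ifsCompAffine, AffineMap.coe_comp, Function.comp_apply, ih, ifsComp]

def prependPrefix {N : ℕ} (σ : ℕ → Fin N) (k : ℕ) (τ : ℕ → Fin N) : ℕ → Fin N :=
  fun j => if j < k then σ j else τ (j - k)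

@[simp]
theorem prependPrefix_zero {N : ℕ} (σ τ : ℕ → Fin N) : prependPrefix σ 0 τ = τ := by
  funext j
  simp [prependPrefix]

theorem prependPrefix_prependSymbol {N : ℕ} (σ : ℕ → Fin N) (k : ℕ) (τ : ℕ → Fin N) :
    prependPrefix σ k (prependSymbol (σ k) τ) = prependPrefix σ (k + 1) τ := by
  funext j
  unfold prependPrefix
  rcases lt_trichotomy j k with h | rfl | h
  · simp [h, h.trans (Nat.lt_succ_self k)]
  · simp [prependSymbol]
  · obtain ⟨d, rfl⟩ : ∃ d, j = k + 1 + d := ⟨j - (k + 1), by omega⟩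
    rw [if_neg (by omega), if_neg (by omega), show k + 1 + d - k = d + 1 by omega, prependSymbol,
      show k + 1 + d - (k + 1) = d by omega]

theorem tendsto_prependPrefix {N : ℕ} (σ τ : ℕ → Fin N) :
    Tendsto (fun k => prependPrefix σ k τ) atTop (𝓝 σ) := by
  rw [tendsto_pi_nhds]
  intro j
  refine tendsto_const_nhds.congr' ?_
  filter_upwards [eventually_gt_atTop j] with k hk
  simp [prependPrefix, hk]

section Coding

variable {E : Type*} {N : ℕ} {f : Fin N → E → E} {π : (ℕ → Fin N) → E}

theorem ifsComp_coding (hπ_comm : ∀ n σ, f n (π σ) = π (prependSymbol n σ))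
    (σ τ : ℕ → Fin N) (k : ℕ) : ifsComp f σ k (π τ) = π (prependPrefix σ k τ) := by
  induction k generalizing τ with
  | zero => simp [ifsComp]
  | succ k ih => rw [ifsComp, hπ_comm, ih, prependPrefix_prependSymbol]

theorem tendsto_ifsComp_coding [TopologicalSpace E] (hπ_cont : Continuous π)
    (hπ_comm : ∀ n σ, f n (π σ) = π (prependSymbol n σ)) (σ τ : ℕ → Fin N) :
    Tendsto (fun k => ifsComp f σ k (π τ)) atTop (𝓝 (π σ)) := by
  simpa only [ifsComp_coding hπ_comm, Function.comp_def] using (hπ_cont.tendsto σ).comp (tendsto_prependPrefix σ τ)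

end Coding

theorem point_fibred_on_affine_hull (m N : ℕ)
    (f : Fin N → EuclideanSpace ℝ (Fin m) → EuclideanSpace ℝ (Fin m))
    (hf_affine : ∀ n, ∃ g : EuclideanSpace ℝ (Fin m) →ᵃ[ℝ] EuclideanSpace ℝ (Fin m),
      f n = g)
    (π : (ℕ → Fin N) → EuclideanSpace ℝ (Fin m))
    (hπ_cont : Continuous π)
    (hπ_comm : ∀ (n : Fin N) (σ : ℕ → Fin N), f n (π σ) = π (prependSymbol n σ)) :
    (∀ n : Fin N, Set.MapsTo (f n)
        (affineSpan ℝ (Set.range π) : Set (EuclideanSpace ℝ (Fin m)))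
        (affineSpan ℝ (Set.range π) : Set (EuclideanSpace ℝ (Fin m)))) ∧
    ∀ (σ : ℕ → Fin N),
      ∀ x ∈ (affineSpan ℝ (Set.range π) : Set (EuclideanSpace ℝ (Fin m))),
        Filter.Tendsto (fun k => ifsComp f σ k x) Filter.atTop (nhds (π σ)) := by
  choose g hg using hf_affine
  obtain rfl : f = fun n => ⇑(g n) := funext hg
  beta_reduce at hπ_comm
  refine ⟨fun n => (g n).mapsTo_affineSpan ?_, fun σ x hx => ?_⟩
  · rintro _ ⟨τ, rfl⟩
    rw [hπ_comm]
    exact subset_affineSpan ℝ _ (Set.mem_range_self _)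
  · simp only [← coe_ifsCompAffine]
    refine AffineMap.tendsto_of_mem_affineSpan (ifsCompAffine g σ) ?_ hx
    rintro _ ⟨τ, rfl⟩
    simpa only [coe_ifsCompAffine] using tendsto_ifsComp_coding hπ_cont hπ_comm σ τ
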